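/- For every m ≥ 0, B_4^(m) = (6m³ + 13m² + 9m + 2)/2. -/

import Mathlib

/-- Stirling numbers of the second kind. -/
def stirling : ℕ → ℕ → ℕ
  | 0, 0 => 1
  | 0, _ + 1 => 0
  | _ + 1, 0 => 0
  | n + 1, k + 1 => (k + 1) * stirling n (k + 1) + stirling n k

/-- Higher order Bell numbers: `higherBell m n` is `B_n^(m)`. -/
def higherBell : ℕ → ℕ → ℕ
  | 0, _ => 1
  | _ + 1, 0 => 1
  | m + 1, n + 1 => ∑ k ∈ Finset.Icc 1 (n + 1), higherBell m k * stirling (n + 1) k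

/-!
Since `S(n, n) = 1`, the recursion says `B_{n+1}^(m+1) - B_{n+1}^(m) = Σ_{k=1}^{n} B_k^(m) S(n+1, k)`,
which involves only lower rows. So from the closed forms `B_1^(m) = 1`, `B_2^(m) = m + 1` and
`B_3^(m)`, the value `B_4^(m)` is a sum over `m` of a quadratic in `m`, found by induction on `m`.
-/

theorem stirling_eq_stirlingSecond : ∀ n k, stirling n k = Nat.stirlingSecond n k
  | 0, 0 | 0, _ + 1 | _ + 1, 0 => rfl
  | n + 1, k + 1 => by
    rw [stirling, Nat.stirlingSecond_succ_succ, stirling_eq_stirlingSecond n (k + 1),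
      stirling_eq_stirlingSecond n k]

theorem stirling_self (n : ℕ) : stirling n n = 1 := by
  rw [stirling_eq_stirlingSecond, Nat.stirlingSecond_self]

theorem higherBell_succ_succ (m n : ℕ) :
    higherBell (m + 1) (n + 1) =
      higherBell m (n + 1) + ∑ k ∈ Finset.Icc 1 n, higherBell m k * stirling (n + 1) k := by
  rw [higherBell, Finset.sum_Icc_succ_top (by omega), stirling_self, mul_one, add_comm]

theorem higherBell_one (m : ℕ) : higherBell m 1 = 1 := by
  induction m with
  | zero => rfl
  | succ m ih => simp [higherBell_succ_succ, ih]

theorem higherBell_two (m : ℕ) : higherBell m 2 = m + 1 := by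
  induction m with
  | zero => rfl
  | succ m ih => simp [higherBell_succ_succ, ih, higherBell_one, stirling]

theorem higherBell_three (m : ℕ) : (higherBell m 3 : ℚ) = (3 * m ^ 2 + 5 * m + 2) / 2 := by
  induction m with
  | zero => norm_num [higherBell]
  | succ m ih =>
    have hS : stirling 3 1 = 1 ∧ stirling 3 2 = 3 := by decide
    push_cast [higherBell_succ_succ, Finset.sum_Icc_succ_top, Finset.Icc_self, Finset.sum_singleton,
      higherBell_one, higherBell_two, hS, ih]
    ring

theorem stmt4 (m : ℕ) :
    (higherBell m 4 : ℚ) = (6 * m ^ 3 + 13 * m ^ 2 + 9 * m + 2) / 2 := by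
  induction m with
  | zero => norm_num [higherBell]
  | succ m ih =>
    have hS : stirling 4 1 = 1 ∧ stirling 4 2 = 7 ∧ stirling 4 3 = 6 := by decide
    push_cast [higherBell_succ_succ, Finset.sum_Icc_succ_top, Finset.Icc_self, Finset.sum_singleton,
      higherBell_one, higherBell_two, higherBell_three, hS, ih]
    ring
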